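/- arXiv:1706.07631 — 2 statements merged into one kernel-verified Lean document; each statement's English description precedes it below -/
import Mathlib

section
/- Let C1, C2 be binary linear codes of length ℓ, and let C = {(x+a | x+b | x+a+b) : x ∈ C1, a,b ∈ C2}. If C1 ⊆ F_2^ℓ is self-dual and C2 ⊆ F_2^ℓ is self-dual, then C is a self-orthogonal code of dimension at most 3ℓ/2 in F_2^{3ℓ}; in particular every two codewords of C are orthogonal under the standard inner product. -/
/-- The dual of a linear code with respect to the standard (Euclidean) inner product. -/
def dualCode {F : Type*} [Field F] {n : ℕ} (C : Submodule F (Fin n → F)) :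
    Submodule F (Fin n → F) where
  carrier := {u | ∀ v ∈ C, ∑ i, u i * v i = 0}
  add_mem' := by
    intro a b ha hb v hv
    simp only [Set.mem_setOf_eq] at *
    rw [show ∑ i, (a + b) i * v i = ∑ i, (a i * v i + b i * v i) by simp [add_mul]]
    rw [Finset.sum_add_distrib, ha v hv, hb v hv, add_zero]
  zero_mem' := by intro v hv; simp
  smul_mem' := by
    intro c a ha v hv
    simp only [Set.mem_setOf_eq] at *
    rw [show ∑ i, (c • a) i * v i = c * ∑ i, a i * v i by
      rw [Finset.mul_sum]; simp [mul_assoc]]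
    rw [ha v hv, mul_zero]

section aux

variable {ℓ : ℕ}

abbrev Vℓ (ℓ : ℕ) := Fin ℓ → ZMod 2

/-- standard bilinear form -/
noncomputable def stdB (ℓ : ℕ) : LinearMap.BilinForm (ZMod 2) (Vℓ ℓ) :=
  Matrix.toBilin' (1 : Matrix (Fin ℓ) (Fin ℓ) (ZMod 2))

lemma stdB_apply (u v : Vℓ ℓ) : stdB ℓ u v = ∑ i, u i * v i := by
  rw [stdB, Matrix.toBilin'_apply']
  simp [dotProduct]

lemma stdB_nondeg : (stdB ℓ).Nondegenerate := by
  apply Matrix.Nondegenerate.toBilin'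
  apply Matrix.nondegenerate_of_det_ne_zero
  simp

lemma stdB_refl : (stdB ℓ).IsRefl := by
  intro u v h
  rw [stdB_apply] at *
  rw [← h]
  exact Finset.sum_congr rfl fun i _ => mul_comm _ _

lemma dualCode_eq_orthogonal (C : Submodule (ZMod 2) (Vℓ ℓ)) :
    dualCode C = (stdB ℓ).orthogonal C := by
  ext u
  constructor
  · intro hu v hv
    have := hu v hv
    show stdB ℓ v u = 0
    rw [stdB_apply]
    rw [← this]
    exact Finset.sum_congr rfl fun i _ => mul_comm _ _
  · intro hu v hv
    have h3 : ∑ i, v i * u i = 0 := by rw [← stdB_apply]; exact hu v hv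
    rw [← h3]
    exact Finset.sum_congr rfl fun i _ => mul_comm _ _

lemma selfdual_finrank {C : Submodule (ZMod 2) (Vℓ ℓ)} (h : C = dualCode C) :
    2 * Module.finrank (ZMod 2) C = ℓ := by
  have := LinearMap.BilinForm.finrank_orthogonal (stdB_nondeg (ℓ := ℓ)) C
  rw [← dualCode_eq_orthogonal, ← h] at this
  have hle : Module.finrank (ZMod 2) C ≤ Module.finrank (ZMod 2) (Vℓ ℓ) :=
    Submodule.finrank_le C
  have hV : Module.finrank (ZMod 2) (Vℓ ℓ) = ℓ := by simp
  omega

lemma key_identity : ∀ x a b y a' b' : ZMod 2,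
    (x + a) * (y + a') + (x + b) * (y + b') + (x + a + b) * (y + a' + b')
      = x * y + a * b' + b * a' := by decide

end aux

/-- If `C1 ⊆ F₂^ℓ` and `C2 ⊆ F₂^ℓ` are self-dual binary codes, then Turyn's
construction `C = {(x+a | x+b | x+a+b)}` is a self-orthogonal code of
dimension at most `3ℓ/2`; in particular any two codewords of `C` are
orthogonal with respect to the standard inner product on `F₂^{3ℓ}`
(computed blockwise). -/
theorem turyn_selfOrthogonal {ℓ : ℕ}
    (C1 C2 : Submodule (ZMod 2) (Fin ℓ → ZMod 2))
    (h1 : C1 = dualCode C1) (h2 : C2 = dualCode C2) :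
    ∃ C : Submodule (ZMod 2)
        ((Fin ℓ → ZMod 2) × (Fin ℓ → ZMod 2) × (Fin ℓ → ZMod 2)),
      (C : Set ((Fin ℓ → ZMod 2) × (Fin ℓ → ZMod 2) × (Fin ℓ → ZMod 2))) =
        {p | ∃ x ∈ C1, ∃ a ∈ C2, ∃ b ∈ C2, p = (x + a, x + b, x + a + b)} ∧
      (∀ p ∈ C, ∀ q ∈ C,
        (∑ i, p.1 i * q.1 i) + (∑ i, p.2.1 i * q.2.1 i) +
          (∑ i, p.2.2 i * q.2.2 i) = 0) ∧
      Module.finrank (ZMod 2) C ≤ 3 * ℓ / 2 := by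
  let f : (C1 × C2 × C2) →ₗ[ZMod 2] ((Fin ℓ → ZMod 2) × (Fin ℓ → ZMod 2) × (Fin ℓ → ZMod 2)) :=
    { toFun := fun t => ((t.1 : (Fin ℓ → ZMod 2)) + t.2.1, (t.1 : (Fin ℓ → ZMod 2)) + t.2.2,
        (t.1 : (Fin ℓ → ZMod 2)) + t.2.1 + t.2.2)
      map_add' := by
        rintro ⟨x, a, b⟩ ⟨y, a', b'⟩
        simp only [Prod.fst_add, Prod.snd_add, Submodule.coe_add, Prod.mk_add_mk, Prod.ext_iff]
        refine ⟨by abel, by abel, by abel⟩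
      map_smul' := by
        intro c t
        simp only [Submodule.coe_smul, RingHom.id_apply, Prod.smul_mk, smul_add]
        rfl }
  refine ⟨LinearMap.range f, ?_, ?_, ?_⟩
  · ext p
    simp only [SetLike.mem_coe, LinearMap.mem_range, Set.mem_setOf_eq]
    constructor
    · rintro ⟨⟨x, a, b⟩, rfl⟩
      exact ⟨x, x.2, a, a.2, b, b.2, rfl⟩
    · rintro ⟨x, hx, a, ha, b, hb, rfl⟩
      exact ⟨⟨⟨x, hx⟩, ⟨a, ha⟩, ⟨b, hb⟩⟩, rfl⟩
  · rintro p ⟨⟨x, a, b⟩, rfl⟩ q ⟨⟨y, a', b'⟩, rfl⟩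
    have hxy : ∑ i, (x : (Fin ℓ → ZMod 2)) i * (y : (Fin ℓ → ZMod 2)) i = 0 := by
      have hx : (x : Fin ℓ → ZMod 2) ∈ dualCode C1 := by rw [← h1]; exact x.2
      exact hx _ y.2
    have hab' : ∑ i, (a : (Fin ℓ → ZMod 2)) i * (b' : (Fin ℓ → ZMod 2)) i = 0 := by
      have ha : (a : Fin ℓ → ZMod 2) ∈ dualCode C2 := by rw [← h2]; exact a.2
      exact ha _ b'.2
    have hba' : ∑ i, (b : (Fin ℓ → ZMod 2)) i * (a' : (Fin ℓ → ZMod 2)) i = 0 := by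
      have hb : (b : Fin ℓ → ZMod 2) ∈ dualCode C2 := by rw [← h2]; exact b.2
      exact hb _ a'.2
    show (∑ i, ((x : (Fin ℓ → ZMod 2)) + a) i * ((y : (Fin ℓ → ZMod 2)) + a') i) +
        (∑ i, ((x : (Fin ℓ → ZMod 2)) + b) i * ((y : (Fin ℓ → ZMod 2)) + b') i) +
        (∑ i, ((x : (Fin ℓ → ZMod 2)) + a + b) i * ((y : (Fin ℓ → ZMod 2)) + a' + b') i) = 0
    rw [← Finset.sum_add_distrib, ← Finset.sum_add_distrib]
    have : ∀ i : Fin ℓ, ((x : (Fin ℓ → ZMod 2)) + a) i * ((y : (Fin ℓ → ZMod 2)) + a') i +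
        ((x : (Fin ℓ → ZMod 2)) + b) i * ((y : (Fin ℓ → ZMod 2)) + b') i +
        ((x : (Fin ℓ → ZMod 2)) + a + b) i * ((y : (Fin ℓ → ZMod 2)) + a' + b') i
        = (x : (Fin ℓ → ZMod 2)) i * (y : (Fin ℓ → ZMod 2)) i + (a : (Fin ℓ → ZMod 2)) i * (b' : (Fin ℓ → ZMod 2)) i +
          (b : (Fin ℓ → ZMod 2)) i * (a' : (Fin ℓ → ZMod 2)) i := by
      intro i
      simp only [Pi.add_apply]
      exact key_identity _ _ _ _ _ _
    rw [Finset.sum_congr rfl fun i _ => this i]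
    rw [Finset.sum_add_distrib, Finset.sum_add_distrib, hxy, hab', hba']
    simp
  · refine le_trans (LinearMap.finrank_range_le f) ?_
    rw [Module.finrank_prod, Module.finrank_prod]
    have e1 := selfdual_finrank h1
    have e2 := selfdual_finrank h2
    have key : 2 * (Module.finrank (ZMod 2) C1 + (Module.finrank (ZMod 2) C2 +
        Module.finrank (ZMod 2) C2)) = 3 * ℓ := by
      rw [mul_add, mul_add, e1, e2]; ring
    omega
end

section
/- With notation as in the quasi-cyclic correspondence, for a,b ∈ F_q^{ℓm}: the Euclidean inner products (T^{ℓk}(a))·b vanish for all 0 ≤ k ≤ m−1 if and only if the Hermitian inner product ⟨φ(a), φ(b)⟩ vanishes in R = F_q[Y]/(Y^m−1), where the conjugation on R sends Y to Y^{m−1} and ⟨x,y⟩ = Σ_{j=0}^{ℓ−1} x_j · conj(y_j). -/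
set_option synthInstance.maxHeartbeats 400000

open Polynomial

/-- The ring `R = F_q[Y]/(Y^m - 1)`. -/
noncomputable abbrev cycRing (F : Type*) [Field F] (m : ℕ) :=
  Polynomial F ⧸ Ideal.span {(X : Polynomial F) ^ m - 1}

/-- The standard identification `φ : F_q^{ℓm} → R^ℓ`, sending `c = (c_{i,j})`
to `(c_0(Y), …, c_{ℓ-1}(Y))` with `c_j(Y) = Σ_i c_{i,j} Y^i`. -/
noncomputable def phiMap {F : Type*} [Field F] {ℓ m : ℕ} [NeZero m]
    (c : ZMod m → Fin ℓ → F) (j : Fin ℓ) : cycRing F m :=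
  Ideal.Quotient.mk (Ideal.span {(X : Polynomial F) ^ m - 1})
    (∑ i : ZMod m, C (c i j) * X ^ i.val)

/-! In the basis `1, Y, …, Y^(m-1)` of `R`, and using `conj (Y ^ i) = Y ^ (-i)`, the
Hermitian product `∑ j, φ(a)_j * conj (φ(b)_j)` has coefficient
`∑ i, ∑ j, a (i + d) j * b i j` at `Y ^ d`. This is the Euclidean product of `T^{ℓk}(a)`
with `b` for `k = -d`, so the Hermitian product vanishes iff all shifted products do. -/

theorem AdjoinRoot.linearIndependent_root_pow {R : Type*} [CommRing R] {g : R[X]}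
    (hg : g.Monic) : LinearIndependent R fun i : Fin g.natDegree => root g ^ (i : ℕ) := by
  have h := (powerBasis' hg).basis.linearIndependent
  rw [PowerBasis.coe_basis] at h
  exact h

section PowVal

variable {M : Type*} [Monoid M] {m : ℕ} [NeZero m] {y : M}

theorem pow_val_add (hy : y ^ m = 1) (i k : ZMod m) :
    y ^ (i + k).val = y ^ i.val * y ^ k.val := by
  rw [ZMod.val_add, ← pow_eq_pow_mod _ hy, pow_add]

theorem pow_val_neg (hy : y ^ m = 1) (i : ZMod m) :
    y ^ (-i).val = (y ^ (m - 1)) ^ i.val := by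
  have hcast : (((m - 1) * i.val : ℕ) : ZMod m) = -i := by
    rw [Nat.cast_mul, Nat.cast_pred (NeZero.pos m), ZMod.natCast_self, ZMod.natCast_zmod_val]
    ring
  rw [← pow_mul, pow_eq_pow_mod ((m - 1) * i.val) hy, ← ZMod.val_natCast, hcast]

end PowVal

theorem sum_smul_pow_val_mul_sum_smul_pow_val_neg {F A : Type*} [CommSemiring F]
    [CommSemiring A] [Algebra F A] {m : ℕ} [NeZero m] {y : A} (hy : y ^ m = 1)
    (u v : ZMod m → F) :
    (∑ i, u i • y ^ i.val) * (∑ i, v i • y ^ (-i).val) =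
      ∑ d, (∑ i, u (i + d) * v i) • y ^ d.val := by
  calc (∑ i, u i • y ^ i.val) * (∑ i, v i • y ^ (-i).val)
      = ∑ i, ∑ d, (u (i + d) * v i) • y ^ d.val := by
        rw [Finset.sum_mul_sum, Finset.sum_comm]
        refine Finset.sum_congr rfl fun i _ => ?_
        refine Fintype.sum_equiv (Equiv.subRight i) _ _ fun d => ?_
        rw [Equiv.subRight_apply, smul_mul_smul_comm, ← pow_val_add hy, add_sub_cancel,
          sub_eq_add_neg]
    _ = ∑ d, (∑ i, u (i + d) * v i) • y ^ d.val := by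
        rw [Finset.sum_comm]
        simp only [Finset.sum_smul]

noncomputable abbrev cycRingGen (F : Type*) [Field F] (m : ℕ) : cycRing F m :=
  Ideal.Quotient.mk (Ideal.span {(X : Polynomial F) ^ m - 1}) X

section CycRing

variable {F : Type*} [Field F] {m : ℕ}

theorem cycRingGen_pow_eq_one : cycRingGen F m ^ m = 1 := by
  have h : Ideal.Quotient.mk (Ideal.span {(X : F[X]) ^ m - 1}) (X ^ m - 1) = 0 :=
    Ideal.Quotient.eq_zero_iff_mem.mpr (Ideal.mem_span_singleton_self _)
  rwa [map_sub, map_pow, map_one, sub_eq_zero] at h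

variable [NeZero m]

theorem linearIndependent_cycRingGen_pow_val :
    LinearIndependent F fun i : ZMod m => cycRingGen F m ^ i.val := by
  have hmonic : ((X : F[X]) ^ m - 1).Monic := by
    simpa using monic_X_pow_sub_C (1 : F) (NeZero.ne m)
  have hdeg : ((X : F[X]) ^ m - 1).natDegree = m := by
    simpa using natDegree_X_pow_sub_C (n := m) (r := (1 : F))
  have hli := AdjoinRoot.linearIndependent_root_pow hmonic
  let toFin : ZMod m → Fin ((X : F[X]) ^ m - 1).natDegree :=
    fun i => ⟨i.val, hdeg.symm ▸ i.val_lt⟩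
  have hinj : Function.Injective toFin := fun i k h => ZMod.val_injective m (Fin.mk.inj h)
  exact hli.comp toFin hinj

theorem phiMap_eq_sum_smul {ℓ : ℕ} (c : ZMod m → Fin ℓ → F) (j : Fin ℓ) :
    phiMap c j = ∑ i, c i j • cycRingGen F m ^ i.val := by
  refine (map_sum _ _ _).trans (Finset.sum_congr rfl fun i _ => ?_)
  rw [C_mul', ← Ideal.Quotient.mkₐ_eq_mk F, map_smul, map_pow]
  rfl

theorem conj_phiMap_eq_sum_smul {ℓ : ℕ} {conj : cycRing F m →ₐ[F] cycRing F m}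
    (hconj : conj (cycRingGen F m) = cycRingGen F m ^ (m - 1))
    (c : ZMod m → Fin ℓ → F) (j : Fin ℓ) :
    conj (phiMap c j) = ∑ i, c i j • cycRingGen F m ^ (-i).val := by
  simp only [phiMap_eq_sum_smul, map_sum, map_smul, map_pow, hconj,
    pow_val_neg cycRingGen_pow_eq_one]

theorem sum_phiMap_mul_conj_phiMap {ℓ : ℕ} {conj : cycRing F m →ₐ[F] cycRing F m}
    (hconj : conj (cycRingGen F m) = cycRingGen F m ^ (m - 1)) (a b : ZMod m → Fin ℓ → F) :
    ∑ j, phiMap a j * conj (phiMap b j) =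
      ∑ d, (∑ i, ∑ j, a (i + d) j * b i j) • cycRingGen F m ^ d.val := by
  simp_rw [conj_phiMap_eq_sum_smul hconj, phiMap_eq_sum_smul,
    sum_smul_pow_val_mul_sum_smul_pow_val_neg cycRingGen_pow_eq_one, Finset.sum_smul]
  rw [Finset.sum_comm]
  exact Finset.sum_congr rfl fun d _ => Finset.sum_comm

end CycRing

/-- For `a, b ∈ F_q^{ℓm}`, the Euclidean inner products `(T^{ℓk}(a)) · b` vanish
for all `0 ≤ k ≤ m-1` if and only if the Hermitian inner product
`⟨φ(a), φ(b)⟩ = Σ_j φ(a)_j ⬝ conj(φ(b)_j)` vanishes in `R = F_q[Y]/(Y^m - 1)`,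
where `conj` is the `F_q`-algebra involution of `R` determined by `Y ↦ Y^{m-1}`. -/
theorem shift_orthogonal_iff_hermitian {F : Type*} [Field F] {ℓ m : ℕ} [NeZero m]
    (conj : cycRing F m →ₐ[F] cycRing F m)
    (hconj : conj (Ideal.Quotient.mk (Ideal.span {(X : Polynomial F) ^ m - 1}) X) =
      Ideal.Quotient.mk (Ideal.span {(X : Polynomial F) ^ m - 1}) (X ^ (m - 1)))
    (a b : ZMod m → Fin ℓ → F) :
    (∀ k : ZMod m, ∑ i : ZMod m, ∑ j : Fin ℓ, a (i - k) j * b i j = 0) ↔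
      ∑ j : Fin ℓ, phiMap a j * conj (phiMap b j) = 0 := by
  rw [sum_phiMap_mul_conj_phiMap (by rw [hconj, map_pow]),
    ← (Equiv.neg (ZMod m)).forall_congr_right]
  simp only [Equiv.neg_apply, sub_neg_eq_add]
  constructor
  · intro hcoeff
    simp only [hcoeff, zero_smul, Finset.sum_const_zero]
  · exact Fintype.linearIndependent_iff.mp linearIndependent_cycRingGen_pow_val _
end
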